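/- The map ψ restricts to a bijection from the set of matrices W ∈ Matrix (Fin n) (Fin n) ℝ satisfying the strict trapeze inequalities and the strict parallelogram inequalities onto the set TPtrop of n×n tropical totally positive matrices. -/

import Mathlib

open Finset

/-- Truncated predecessor in `Fin n` (1-indexed entry `i-1`). -/
def fpred {n : ℕ} (j : Fin n) : Fin n :=
  ⟨j.val - 1, Nat.lt_of_le_of_lt (Nat.sub_le _ _) j.isLt⟩

/-- `ψ(W)_{i,j}` is the tropical weight of the uppermost path from source `i`
to target `j` in the canonical planar network `G_n`. -/
def psi (n : ℕ) (W : Matrix (Fin n) (Fin n) ℝ) : Matrix (Fin n) (Fin n) ℝ :=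
  fun i j => if i ≤ j then ∑ t ∈ Finset.Icc i j, W i t else ∑ t ∈ Finset.Icc j i, W t j

/-- The map `φ`, inverse of `ψ`. -/
def phi (n : ℕ) (A : Matrix (Fin n) (Fin n) ℝ) : Matrix (Fin n) (Fin n) ℝ :=
  fun i j =>
    if i = j then A i j
    else if i < j then A i j - A i (fpred j)
    else A i j - A (fpred i) j

/-- Weak trapeze inequalities. -/
def WeakTrapeze (n : ℕ) (W : Matrix (Fin n) (Fin n) ℝ) : Prop :=
  ∀ i : Fin n, 0 < i.val →
    W i (fpred i) + W (fpred i) (fpred i) + W (fpred i) i ≤ W i i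

/-- Strict trapeze inequalities. -/
def StrictTrapeze (n : ℕ) (W : Matrix (Fin n) (Fin n) ℝ) : Prop :=
  ∀ i : Fin n, 0 < i.val →
    W i (fpred i) + W (fpred i) (fpred i) + W (fpred i) i < W i i

/-- Weak parallelogram inequalities. -/
def WeakPara (n : ℕ) (W : Matrix (Fin n) (Fin n) ℝ) : Prop :=
  ∀ i j : Fin n, ∀ _h : j.val + 2 ≤ i.val,
    W i j ≤ W i ⟨j.val + 1, by have := i.isLt; omega⟩ ∧
    W j i ≤ W ⟨j.val + 1, by have := i.isLt; omega⟩ i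

/-- Strict parallelogram inequalities. -/
def StrictPara (n : ℕ) (W : Matrix (Fin n) (Fin n) ℝ) : Prop :=
  ∀ i j : Fin n, ∀ _h : j.val + 2 ≤ i.val,
    W i j < W i ⟨j.val + 1, by have := i.isLt; omega⟩ ∧
    W j i < W ⟨j.val + 1, by have := i.isLt; omega⟩ i

/-- Maximum, over the permutations of sign `ε`, of the tropical weight of the
permutation in the `k × k` matrix `B` (computed in `WithBot ℝ`, the maximum over
the empty set being `⊥ = -∞`). -/
def tropPermSup (k : ℕ) (ε : ℤˣ) (B : Matrix (Fin k) (Fin k) (WithBot ℝ)) : WithBot ℝ :=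
  (Finset.univ.filter fun σ : Equiv.Perm (Fin k) => Equiv.Perm.sign σ = ε).sup
    fun σ => ∑ i, B i (σ i)

/-- Tropical total nonnegativity of a matrix over `ℝ ∪ {-∞}`. -/
def IsTropTN (n : ℕ) (A : Matrix (Fin n) (Fin n) (WithBot ℝ)) : Prop :=
  ∀ (k : ℕ) (r c : Fin k → Fin n), StrictMono r → StrictMono c →
    tropPermSup k (-1) (A.submatrix r c) ≤ tropPermSup k 1 (A.submatrix r c)

/-- Tropical total positivity of a real matrix. -/
def IsTropTP (n : ℕ) (A : Matrix (Fin n) (Fin n) ℝ) : Prop :=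
  ∀ (k : ℕ), 2 ≤ k → ∀ (r c : Fin k → Fin n), StrictMono r → StrictMono c →
    tropPermSup k (-1) ((A.map ((↑) : ℝ → WithBot ℝ)).submatrix r c) <
      tropPermSup k 1 ((A.map ((↑) : ℝ → WithBot ℝ)).submatrix r c)

/-- Max-plus matrix product. -/
def tropMul {l m p : ℕ} (A : Matrix (Fin l) (Fin m) (WithBot ℝ))
    (B : Matrix (Fin m) (Fin p) (WithBot ℝ)) : Matrix (Fin l) (Fin p) (WithBot ℝ) :=
  fun i j => Finset.univ.sup fun k => A i k + B k j

/-- Tropical identity matrix. -/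
def tropId (n : ℕ) : Matrix (Fin n) (Fin n) (WithBot ℝ) :=
  fun i j => if i = j then 0 else ⊥

/-- Tropical elementary Jacobi matrix `x_i(s)` (0-indexed: `s` in position `(i, i+1)`). -/
def xUp (n : ℕ) (i : ℕ) (s : ℝ) : Matrix (Fin n) (Fin n) (WithBot ℝ) :=
  fun a b => if a = b then 0 else if a.val = i ∧ b.val = i + 1 then (s : WithBot ℝ) else ⊥

/-- Tropical elementary Jacobi matrix `x̄_i(s)` (0-indexed: `s` in position `(i+1, i)`). -/
def xLow (n : ℕ) (i : ℕ) (s : ℝ) : Matrix (Fin n) (Fin n) (WithBot ℝ) :=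
  fun a b => if a = b then 0 else if a.val = i + 1 ∧ b.val = i then (s : WithBot ℝ) else ⊥

/-- Tropical elementary Jacobi matrix `x∘_i(s)` (0-indexed diagonal matrix,
`s` in position `(i, i)`). -/
def xDiag (n : ℕ) (i : ℕ) (s : ℝ) : Matrix (Fin n) (Fin n) (WithBot ℝ) :=
  fun a b => if a = b then (if a.val = i then (s : WithBot ℝ) else 0) else ⊥

/-- Entry of `W` looked up with natural-number (0-based) indices. -/
def wnat (n : ℕ) (W : Matrix (Fin n) (Fin n) ℝ) (a b : ℕ) : ℝ :=
  if h : a < n ∧ b < n then W ⟨a, h.1⟩ ⟨b, h.2⟩ else 0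

/-- The left part `L(W)` of the canonical planar network:
`L(W) = ⊙_{k=1}^{n−1} ⊙_{t=1}^{k} x̄_{n−k+t−1}(W_{n−k+t, t})` (1-indexed). -/
def Lmat (n : ℕ) (W : Matrix (Fin n) (Fin n) ℝ) : Matrix (Fin n) (Fin n) (WithBot ℝ) :=
  ((List.range (n - 1)).flatMap fun k => (List.range (k + 1)).map fun t =>
      xLow n (n - k + t - 2) (wnat n W (n - k + t - 1) t)).foldl tropMul (tropId n)

/-- The diagonal part `D(W) = x∘_1(W_{1,1}) ⊙ ⋯ ⊙ x∘_n(W_{n,n})` (1-indexed). -/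
def Dmat (n : ℕ) (W : Matrix (Fin n) (Fin n) ℝ) : Matrix (Fin n) (Fin n) (WithBot ℝ) :=
  ((List.range n).map fun i => xDiag n i (wnat n W i i)).foldl tropMul (tropId n)

/-- The tropical transfer matrix of the canonical totally connected planar
network `G_n` with weight matrix `W`: `T(W) = L(W) ⊙ D(W) ⊙ (L(Wᵀ))ᵀ`. -/
def Tmat (n : ℕ) (W : Matrix (Fin n) (Fin n) ℝ) : Matrix (Fin n) (Fin n) (WithBot ℝ) :=
  tropMul (tropMul (Lmat n W) (Dmat n W)) (Matrix.transpose (Lmat n W.transpose))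

/-!
The inverse of `ψ` is `φ`, which takes discrete differences along the rows above the diagonal
and along the columns below it. A real matrix is tropically totally positive iff all its
tropical `2 × 2` minors are positive (it is strictly supermodular): at an inversion `i < j` of an
odd permutation `σ`, the even permutation `σ * swap i j` has strictly larger weight. Positivity
of all `2 × 2` minors follows from that of the contiguous ones, and the contiguous `2 × 2` minors
of `ψ(W)` are exactly the trapeze inequalities (on the diagonal) and the parallelogram
inequalities (off it) for `W`.
-/

open Order

section StrictSupermodular

variable {ι κ : Type*} [LinearOrder ι] [LinearOrder κ]

def StrictSupermodular (A : Matrix ι κ ℝ) : Prop :=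
  ∀ ⦃i i'⦄, i < i' → ∀ ⦃j j'⦄, j < j' → A i j' + A i' j < A i j + A i' j'

theorem strictSupermodular_iff_pred [PredOrder ι] [IsPredArchimedean ι] [PredOrder κ]
    [IsPredArchimedean κ] {A : Matrix ι κ ℝ} :
    StrictSupermodular A ↔ ∀ i j, ¬IsMin i → ¬IsMin j →
      A (pred i) j + A i (pred j) < A (pred i) (pred j) + A i j := by
  refine ⟨fun hA i j hi hj => hA (pred_lt_of_not_isMin hi) (pred_lt_of_not_isMin hj),
    fun h i i' hii' j j' hjj' => ?_⟩
  have row_diff_strictMono (j : κ) (hj : ¬IsMin j) : StrictMono fun i => A i j - A i (pred j) :=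
    strictMono_of_pred_lt fun i hi => by linarith [h i j hi hj]
  have col_diff_strictMono : StrictMono fun j => A i' j - A i j :=
    strictMono_of_pred_lt fun j hj => by linarith [row_diff_strictMono j hj hii']
  linarith [col_diff_strictMono hjj']

theorem StrictSupermodular.submatrix {ι' κ' : Type*} [LinearOrder ι'] [LinearOrder κ']
    {A : Matrix ι κ ℝ} (hA : StrictSupermodular A) {r : ι' → ι} {c : κ' → κ}
    (hr : StrictMono r) (hc : StrictMono c) : StrictSupermodular (A.submatrix r c) :=
  fun _ _ hi _ _ hj => hA (hr hi) (hc hj)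

end StrictSupermodular

theorem Equiv.Perm.exists_lt_and_apply_lt_of_ne_one {α : Type*} [LinearOrder α] [Finite α]
    {σ : Equiv.Perm α} (hσ : σ ≠ 1) : ∃ i j, i < j ∧ σ j < σ i := by
  by_contra! h
  have hmono : StrictMono σ := fun i j hij => (h i j hij).lt_of_ne (σ.injective.ne hij.ne)
  refine hσ (Equiv.ext fun i => ?_)
  exact DFunLike.congr_fun (Subsingleton.elim (hmono.orderIsoOfSurjective σ σ.surjective)
    (OrderIso.refl α)) i

theorem Equiv.Perm.sum_apply_mul_swap {α M : Type*} [DecidableEq α] [Fintype α] [AddCommGroup M]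
    (B : α → α → M) (σ : Equiv.Perm α) {i j : α} (hij : i ≠ j) :
    ∑ l, B l ((σ * Equiv.swap i j) l) =
      ∑ l, B l (σ l) + (B i (σ j) + B j (σ i) - B i (σ i) - B j (σ j)) := by
  rw [← sub_eq_iff_eq_add', ← Finset.sum_sub_distrib, Fintype.sum_eq_add i j hij]
  · simp only [Equiv.Perm.coe_mul, Function.comp_apply, Equiv.swap_apply_left,
      Equiv.swap_apply_right]
    abel
  · rintro l ⟨hli, hlj⟩
    simp [Equiv.swap_apply_of_ne_of_ne hli hlj]

theorem sum_map_coe_apply {k : ℕ} (B : Matrix (Fin k) (Fin k) ℝ) (σ : Equiv.Perm (Fin k)) :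
    ∑ i, B.map ((↑) : ℝ → WithBot ℝ) i (σ i) = ↑(∑ i, B i (σ i)) := by
  simp [WithBot.coe_sum]

theorem tropPermSup_neg_one_lt_one {k : ℕ} (hk : 2 ≤ k) {B : Matrix (Fin k) (Fin k) ℝ}
    (hB : StrictSupermodular B) :
    tropPermSup k (-1) (B.map (↑)) < tropPermSup k 1 (B.map (↑)) := by
  have odd_nonempty : (univ.filter fun σ : Equiv.Perm (Fin k) => σ.sign = -1).Nonempty :=
    ⟨Equiv.swap ⟨0, by omega⟩ ⟨1, by omega⟩, by simp⟩
  obtain ⟨σ, hσ, hσ_max⟩ := exists_mem_eq_sup _ odd_nonempty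
    fun σ : Equiv.Perm (Fin k) => ∑ i, B.map ((↑) : ℝ → WithBot ℝ) i (σ i)
  have hσ_sign : σ.sign = -1 := (mem_filter.mp hσ).2
  have hσ_ne : σ ≠ 1 := by rintro rfl; simp at hσ_sign
  obtain ⟨i, j, hij, hσij⟩ := Equiv.Perm.exists_lt_and_apply_lt_of_ne_one hσ_ne
  have hτ : (σ * Equiv.swap i j).sign = 1 := by simp [hσ_sign, hij.ne]
  calc tropPermSup k (-1) (B.map (↑)) = ((∑ l, B l (σ l) : ℝ) : WithBot ℝ) := by
        rw [tropPermSup, hσ_max, sum_map_coe_apply]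
    _ < ((∑ l, B l ((σ * Equiv.swap i j) l) : ℝ) : WithBot ℝ) := by
        rw [WithBot.coe_lt_coe, Equiv.Perm.sum_apply_mul_swap B σ hij.ne]
        linarith [hB hij hσij]
    _ ≤ tropPermSup k 1 (B.map (↑)) := by
        rw [← sum_map_coe_apply]
        exact le_sup (f := fun τ : Equiv.Perm (Fin k) =>
          ∑ l, B.map ((↑) : ℝ → WithBot ℝ) l (τ l))
          (mem_filter.mpr ⟨mem_univ _, hτ⟩)

theorem tropPermSup_two_one (M : Matrix (Fin 2) (Fin 2) (WithBot ℝ)) :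
    tropPermSup 2 1 M = M 0 0 + M 1 1 := by
  have : (univ.filter fun σ : Equiv.Perm (Fin 2) => σ.sign = 1) = {1} := by decide
  simp [tropPermSup, this]

theorem tropPermSup_two_neg_one (M : Matrix (Fin 2) (Fin 2) (WithBot ℝ)) :
    tropPermSup 2 (-1) M = M 0 1 + M 1 0 := by
  have : (univ.filter fun σ : Equiv.Perm (Fin 2) => σ.sign = -1) = {Equiv.swap 0 1} := by
    decide
  simp [tropPermSup, this]

theorem isTropTP_iff_strictSupermodular {n : ℕ} {A : Matrix (Fin n) (Fin n) ℝ} :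
    IsTropTP n A ↔ StrictSupermodular A := by
  refine ⟨fun hA i i' hi j j' hj => ?_, fun hA k hk r c hr hc => ?_⟩
  · have := hA 2 le_rfl ![i, i'] ![j, j'] (by simpa using hi) (by simpa using hj)
    rw [tropPermSup_two_one, tropPermSup_two_neg_one] at this
    simpa [← WithBot.coe_add] using this
  · exact tropPermSup_neg_one_lt_one hk (hA.submatrix hr hc)

section Telescoping

variable {α M : Type*} [LinearOrder α] [LocallyFiniteOrder α] [AddCommGroup M]

theorem Finset.sum_Icc_eq_sum_Icc_pred_add [PredOrder α] {a b : α} (hab : a < b) (f : α → M) :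
    ∑ t ∈ Icc a b, f t = ∑ t ∈ Icc a (pred b), f t + f b := by
  rw [← insert_Icc_pred_right_eq_Icc hab.le, sum_insert
    fun h => (pred_lt_of_not_isMin (not_isMin_of_lt hab)).not_ge (mem_Icc.mp h).2,
    add_comm]

theorem Finset.sum_Icc_eq_of_eq_sub_pred [SuccOrder α] [PredOrder α] [IsSuccArchimedean α]
    {f g : α → M} {a b : α} (hab : a ≤ b) (ha : g a = f a)
    (hg : ∀ t, a < t → g t = f t - f (pred t)) : ∑ t ∈ Icc a b, g t = f b := by
  refine Succ.rec (by simp [ha]) (fun b hab ih => ?_) hab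
  by_cases hb : IsMax b
  · rwa [hb.succ_eq]
  have hlt : a < succ b := hab.trans_lt (lt_succ_of_not_isMax hb)
  rw [sum_Icc_eq_sum_Icc_pred_add hlt, pred_succ_of_not_isMax hb, ih, hg _ hlt,
    pred_succ_of_not_isMax hb, add_sub_cancel]

end Telescoping

section FinIndices

variable {n : ℕ}

theorem fpred_eq_pred (i : Fin n) : fpred i = pred i := by
  cases n with
  | zero => exact i.elim0
  | succ n => cases i using Fin.cases <;> rfl

theorem Fin.val_orderPred (i : Fin n) : (Order.pred i).val = i.val - 1 := by
  rw [← fpred_eq_pred]; rfl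

theorem Fin.not_isMin_iff_pos {i : Fin n} : ¬IsMin i ↔ 0 < i.val := by
  rw [← pred_lt_iff_not_isMin, Fin.lt_def, Fin.val_orderPred]
  omega

theorem strictTrapeze_iff {W : Matrix (Fin n) (Fin n) ℝ} :
    StrictTrapeze n W ↔
      ∀ i, ¬IsMin i → W i (pred i) + W (pred i) (pred i) + W (pred i) i < W i i := by
  simp only [StrictTrapeze, fpred_eq_pred, Fin.not_isMin_iff_pos]

theorem strictPara_iff {W : Matrix (Fin n) (Fin n) ℝ} :
    StrictPara n W ↔
      ∀ i j, ¬IsMin j → j < i → W i (pred j) < W i j ∧ W (pred j) i < W j i := by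
  refine ⟨fun h i j hj hji => ?_, fun h i j hji => ?_⟩
  · rw [Fin.not_isMin_iff_pos] at hj
    have hpj : (⟨(pred j).val + 1, by rw [Fin.val_orderPred]; omega⟩ : Fin n) = j :=
      Fin.ext (by simp only [Fin.val_orderPred]; omega)
    have hji' : (pred j).val + 2 ≤ i.val := by
      rw [Fin.val_orderPred]; have := Fin.lt_def.mp hji; omega
    simpa only [hpj] using h i (pred j) hji'
  · have hpj : pred (⟨j.val + 1, by omega⟩ : Fin n) = j :=
      Fin.ext (by simp [Fin.val_orderPred])
    simpa [hpj] using h i ⟨j.val + 1, by omega⟩ (Fin.not_isMin_iff_pos.mpr j.val.succ_pos)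
      (Fin.lt_def.mpr (show j.val + 1 < i.val by omega))

end FinIndices

section PsiPhi

variable {n : ℕ} (W A : Matrix (Fin n) (Fin n) ℝ) {i j : Fin n}

theorem psi_of_le (h : i ≤ j) : psi n W i j = ∑ t ∈ Icc i j, W i t := if_pos h

theorem psi_of_gt (h : j < i) : psi n W i j = ∑ t ∈ Icc j i, W t j := if_neg h.not_ge

theorem psi_self (i : Fin n) : psi n W i i = W i i := by
  rw [psi_of_le W le_rfl, Icc_self, sum_singleton]

theorem psi_eq_psi_pred_right_add (h : i < j) : psi n W i j = psi n W i (pred j) + W i j := by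
  rw [psi_of_le W h.le, psi_of_le W (le_pred_of_lt h), sum_Icc_eq_sum_Icc_pred_add h]

theorem psi_eq_psi_pred_left_add (h : j < i) : psi n W i j = psi n W (pred i) j + W i j := by
  rw [psi_of_gt W h, sum_Icc_eq_sum_Icc_pred_add h]
  rcases (le_pred_of_lt h).eq_or_lt with hj | hj
  · rw [← hj, psi_self, Icc_self, sum_singleton]
  · rw [psi_of_gt W hj]

theorem phi_self (i : Fin n) : phi n A i i = A i i := if_pos rfl

theorem phi_of_lt (h : i < j) : phi n A i j = A i j - A i (pred j) := by
  simp [phi, h.ne, h, fpred_eq_pred]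

theorem phi_of_gt (h : j < i) : phi n A i j = A i j - A (pred i) j := by
  simp [phi, h.ne', h.not_gt, fpred_eq_pred]

theorem phi_psi : phi n (psi n W) = W := by
  ext i j
  rcases lt_trichotomy i j with h | rfl | h
  · rw [phi_of_lt _ h, psi_eq_psi_pred_right_add W h, add_sub_cancel_left]
  · rw [phi_self, psi_self]
  · rw [phi_of_gt _ h, psi_eq_psi_pred_left_add W h, add_sub_cancel_left]

theorem psi_phi : psi n (phi n A) = A := by
  ext i j
  rcases le_or_gt i j with h | h
  · rw [psi_of_le _ h]
    exact sum_Icc_eq_of_eq_sub_pred h (phi_self A i) fun t ht => phi_of_lt A ht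
  · rw [psi_of_gt _ h]
    exact sum_Icc_eq_of_eq_sub_pred (f := (A · j)) h.le (phi_self A j) fun t ht => phi_of_gt A ht

theorem psi_minor_lt_iff_of_lt (hi : ¬IsMin i) (hij : i < j) :
    psi n W (pred i) j + psi n W i (pred j) < psi n W (pred i) (pred j) + psi n W i j ↔
      W (pred i) j < W i j := by
  rw [psi_eq_psi_pred_right_add W ((pred_lt_of_not_isMin hi).trans hij),
    psi_eq_psi_pred_right_add W hij]
  constructor <;> intro h <;> linarith

theorem psi_minor_lt_iff_of_gt (hj : ¬IsMin j) (hji : j < i) :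
    psi n W (pred i) j + psi n W i (pred j) < psi n W (pred i) (pred j) + psi n W i j ↔
      W i (pred j) < W i j := by
  rw [psi_eq_psi_pred_left_add W ((pred_lt_of_not_isMin hj).trans hji),
    psi_eq_psi_pred_left_add W hji]
  constructor <;> intro h <;> linarith

theorem psi_minor_lt_iff_of_eq (hi : ¬IsMin i) :
    psi n W (pred i) i + psi n W i (pred i) < psi n W (pred i) (pred i) + psi n W i i ↔
      W i (pred i) + W (pred i) (pred i) + W (pred i) i < W i i := by
  have h := pred_lt_of_not_isMin hi
  rw [psi_eq_psi_pred_right_add W h, psi_eq_psi_pred_left_add W h, psi_self, psi_self]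
  constructor <;> intro h <;> linarith

end PsiPhi

theorem strictSupermodular_psi_iff {n : ℕ} {W : Matrix (Fin n) (Fin n) ℝ} :
    StrictSupermodular (psi n W) ↔ StrictTrapeze n W ∧ StrictPara n W := by
  rw [strictSupermodular_iff_pred, strictTrapeze_iff, strictPara_iff]
  refine ⟨fun h => ⟨fun i hi => ?_, fun i j hj hji => ⟨?_, ?_⟩⟩,
    fun ⟨hT, hP⟩ i j hi hj => ?_⟩
  · exact (psi_minor_lt_iff_of_eq W hi).1 (h i i hi hi)
  · exact (psi_minor_lt_iff_of_gt W hj hji).1 (h i j (not_isMin_of_lt hji) hj)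
  · exact (psi_minor_lt_iff_of_lt W hj hji).1 (h j i hj (not_isMin_of_lt hji))
  · rcases lt_trichotomy i j with hij | rfl | hji
    · exact (psi_minor_lt_iff_of_lt W hi hij).2 (hP j i hi hij).2
    · exact (psi_minor_lt_iff_of_eq W hi).2 (hT i hi)
    · exact (psi_minor_lt_iff_of_gt W hj hji).2 (hP i j hj hji).1

/-- `ψ` is a bijection from the weight matrices satisfying the
strict trapeze and parallelogram inequalities onto `TPtrop`. -/
theorem psi_bijOn_TP (n : ℕ) :
    Set.BijOn (psi n) {W | StrictTrapeze n W ∧ StrictPara n W}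
      {A | IsTropTP n A} := by
  have isTropTP_psi_iff (W : Matrix (Fin n) (Fin n) ℝ) :
      IsTropTP n (psi n W) ↔ StrictTrapeze n W ∧ StrictPara n W := by
    rw [isTropTP_iff_strictSupermodular, strictSupermodular_psi_iff]
  refine Set.InvOn.bijOn ⟨fun W _ => phi_psi W, fun A _ => psi_phi A⟩
    (fun W => (isTropTP_psi_iff W).2) fun A hA => (isTropTP_psi_iff _).1 (by rwa [psi_phi])
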